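/- arXiv:2504.15413 — 3 statements merged into one kernel-verified Lean document; each statement's English description precedes it below -/
import Mathlib

section
/- For a word w of weight λ (a partition of m) and a word t of weight λ' (the conjugate partition), the blockwise signature sgn_t(w) is nonzero if and only if the multiset of pairs {(w_i, t_i) : i ∈ [m]} equals the set of cells {(i,j) : 1 ≤ i ≤ ℓ(λ), 1 ≤ j ≤ λ_i} of the Young diagram of λ. -/
open Finset

/-- Number of inversions of a word given as a list. -/
def invCount : List ℕ → ℕ
  | [] => 0
  | a :: l => l.countP (fun b => decide (b < a)) + invCount l

/-- Sign of a finite sequence: its permutation sign if it is a permutation of `1,…,k`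
(`k` = its length), and `0` otherwise. -/
def seqSgn (l : List ℕ) : ℤ :=
  if (l : Multiset ℕ) = ((List.range' 1 l.length : List ℕ) : Multiset ℕ) then
    (-1) ^ invCount l
  else 0

/-- Positions (in increasing order) of the letter `i` in the word `s`. -/
def blockList {m : ℕ} (s : Fin m → ℕ) (i : ℕ) : List (Fin m) :=
  (List.finRange m).filter (fun p => decide (s p = i))

/-- The blockwise signature `sgn_s(σ)`: the product over the blocks of `s` of the signs of
`σ` read along the block (in increasing position order). -/
def sgnWord {m : ℕ} (s σ : Fin m → ℕ) : ℤ :=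
  ∏ i ∈ Finset.range m, seqSgn ((blockList s (i + 1)).map σ)

/-- The action of `S_m` on words of length `m` by permuting positions: `(π·t) i = t (π⁻¹ i)`. -/
def pact {m : ℕ} (π : Equiv.Perm (Fin m)) (t : Fin m → ℕ) : Fin m → ℕ :=
  fun p => t (π⁻¹ p)

/-- `w` is a word of weight `L`: the letter `i+1` occurs exactly `L.getD i 0` times. -/
def hasWeight {m : ℕ} (w : Fin m → ℕ) (L : List ℕ) : Prop :=
  ∀ i : ℕ, (Finset.univ.filter (fun p => w p = i + 1)).card = L.getD i 0

/-- `L` is a partition of `m`. -/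
def IsPartitionOf (m : ℕ) (L : List ℕ) : Prop :=
  L.Pairwise (· ≥ ·) ∧ (∀ p ∈ L, 0 < p) ∧ L.sum = m

/-- The conjugate partition, as a list: its `j`-th part is `#{i : L i ≥ j+1}`. -/
def conjList (L : List ℕ) : List ℕ :=
  (List.range (L.headD 0)).map (fun j => L.countP (fun p => decide (j + 1 ≤ p)))

/-- The inversion sign `(−1)^w` of a word. -/
def wordSign {m : ℕ} (w : Fin m → ℕ) : ℤ :=
  (-1) ^ invCount ((List.finRange m).map w)

/-- The inversion sign `(−1)^λ` of a partition: the inversion sign of the word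
`1 2 … λ₁ 1 2 … λ₂ ⋯`. -/
def partSign (L : List ℕ) : ℤ :=
  (-1) ^ invCount ((L.map (fun p => List.range' 1 p)).flatten)

/-! Both sides split along the blocks of `t`, which play the role of the columns of the diagram.
`sgn_t(w) ≠ 0` says that for every `j` the letters of `w` in the `j`-th block of `t` are a
permutation of `1, …, λ'_j`, the size of that block. On the other side, the pairs with second
coordinate `j` are recorded by the multiset of letters of `w` in the `j`-th block, and the cells in
column `j` are `(1, j), …, (λ'_j, j)` because `λ` is weakly decreasing. Finally no position of `t`
carries the letter `0`, since the blocks `1, 2, …` already have `λ'_1 + λ'_2 + ⋯ = m` positions. -/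

lemma List.flatMap_ite_singleton {α β : Type*} (l : List α) (P : α → Prop) [DecidablePred P]
    (g : α → β) :
    l.flatMap (fun a => if P a then [g a] else []) = (l.filter (fun a => decide (P a))).map g := by
  induction l with
  | nil => rfl
  | cons a l ih => by_cases h : P a <;> simp [h, ih]

lemma Multiset.eq_iff_forall_map_fst_filter_snd_eq {α β : Type*} [DecidableEq α] [DecidableEq β]
    {M N : Multiset (α × β)} :
    M = N ↔ ∀ b, (M.filter (fun c => c.2 = b)).map Prod.fst
      = (N.filter (fun c => c.2 = b)).map Prod.fst := by
  refine ⟨fun h b => h ▸ rfl, fun h => ?_⟩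
  have hfiber : ∀ (P : Multiset (α × β)) b,
      P.filter (fun c => c.2 = b) = ((P.filter (fun c => c.2 = b)).map Prod.fst).map (·, b) := by
    intro P b
    rw [Multiset.map_map]
    conv_lhs => rw [← Multiset.map_id (P.filter _)]
    exact Multiset.map_congr rfl fun c hc => by
      simp [(Multiset.mem_filter.mp hc).2.symm]
  ext x
  rw [← Multiset.count_filter_of_pos (p := fun c => c.2 = x.2) rfl,
    ← Multiset.count_filter_of_pos (p := fun c => c.2 = x.2) (s := N) rfl, hfiber M, hfiber N, h]

lemma headD_le_sum (L : List ℕ) : L.headD 0 ≤ L.sum := by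
  cases L <;> simp

lemma le_headD_of_pairwise {L : List ℕ} (hsort : L.Pairwise (· ≥ ·)) {p : ℕ} (hp : p ∈ L) :
    p ≤ L.headD 0 := by
  cases L with
  | nil => simp at hp
  | cons a L =>
    rcases List.mem_cons.mp hp with rfl | hp
    · exact le_rfl
    · exact List.rel_of_pairwise_cons hsort hp

lemma conjList_getD_of_headD_le (L : List ℕ) {j : ℕ} (hj : L.headD 0 ≤ j) :
    (conjList L).getD j 0 = 0 :=
  List.getD_eq_default _ _ (by simpa [conjList] using hj)

lemma conjList_getD {L : List ℕ} (hsort : L.Pairwise (· ≥ ·)) (j : ℕ) :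
    (conjList L).getD j 0 = L.countP (fun p => decide (j + 1 ≤ p)) := by
  by_cases hj : j < L.headD 0
  · have hlen : j < (conjList L).length := by simpa [conjList] using hj
    rw [List.getD_eq_getElem _ _ hlen]
    simp [conjList]
  · rw [conjList_getD_of_headD_le L (by omega), eq_comm, List.countP_eq_zero]
    intro p hp
    have := le_headD_of_pairwise hsort hp
    simp only [decide_eq_true_eq]
    omega

lemma sum_range_countP_le {n : ℕ} : ∀ {L : List ℕ}, (∀ p ∈ L, p ≤ n) →
    ∑ j ∈ range n, L.countP (fun p => decide (j + 1 ≤ p)) = L.sum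
  | [], _ => by simp
  | a :: L, h => by
    have hcol : (range n).filter (fun j => j + 1 ≤ a) = range a := by
      ext j
      simp only [mem_filter, mem_range]
      have := h a List.mem_cons_self
      omega
    have hrow : ∑ j ∈ range n, (if j + 1 ≤ a then 1 else 0) = a := by
      rw [sum_boole, hcol, card_range, Nat.cast_id]
    simp only [List.countP_cons, List.sum_cons, decide_eq_true_eq, sum_add_distrib, hrow,
      sum_range_countP_le (fun p hp => h p (List.mem_cons_of_mem a hp)), Nat.add_comm]

lemma sum_range_conjList_getD {L : List ℕ} (hsort : L.Pairwise (· ≥ ·)) {n : ℕ}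
    (hn : L.headD 0 ≤ n) : ∑ j ∈ range n, (conjList L).getD j 0 = L.sum := by
  simp only [conjList_getD hsort]
  exact sum_range_countP_le fun p hp => (le_headD_of_pairwise hsort hp).trans hn

lemma filter_range_length_of_pairwise (j : ℕ) : ∀ {L : List ℕ}, L.Pairwise (· ≥ ·) →
    (List.range L.length).filter (fun i => decide (j + 1 ≤ L.getD i 0))
      = List.range (L.countP (fun p => decide (j + 1 ≤ p)))
  | [], _ => rfl
  | a :: L, h => by
    obtain ⟨hle, hsort⟩ := List.pairwise_cons.mp h
    rw [List.length_cons, List.range_succ_eq_map, List.filter_cons, List.filter_map,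
      List.countP_cons]
    have hshift : ((fun i => decide (j + 1 ≤ (a :: L).getD i 0)) ∘ Nat.succ)
        = fun i => decide (j + 1 ≤ L.getD i 0) := rfl
    rw [hshift, filter_range_length_of_pairwise j hsort]
    by_cases ha : j + 1 ≤ a
    · simp [ha, List.range_succ_eq_map]
    · have hzero : L.countP (fun p => decide (j + 1 ≤ p)) = 0 :=
        List.countP_eq_zero.mpr fun p hp => by have := hle p hp; simp; omega
      rw [hzero]
      simp [ha]

def youngCells (L : List ℕ) : List (ℕ × ℕ) :=
  (List.range L.length).flatMap (fun i => (List.range (L.getD i 0)).map (fun j => (i + 1, j + 1)))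

lemma youngCells_filter_snd_eq_zero (L : List ℕ) :
    (youngCells L).filter (fun c => c.2 = 0) = [] := by
  simp [youngCells, List.filter_flatMap, List.filter_map, Function.comp_def]

lemma map_fst_filter_youngCells {L : List ℕ} (hsort : L.Pairwise (· ≥ ·)) (j : ℕ) :
    ((youngCells L).filter (fun c => c.2 = j + 1)).map Prod.fst
      = List.range' 1 ((conjList L).getD j 0) := by
  have hrow : ∀ i, (((List.range (L.getD i 0)).map (fun k => (i + 1, k + 1))).filter
      (fun c => c.2 = j + 1)).map Prod.fst = if j + 1 ≤ L.getD i 0 then [i + 1] else [] := by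
    intro i
    simp only [List.filter_map, Function.comp_def, Nat.add_right_cancel_iff, List.filter_eq,
      List.count_range, List.map_replicate, Order.add_one_le_iff]
    split_ifs <;> rfl
  rw [youngCells, List.filter_flatMap, List.map_flatMap]
  simp only [hrow]
  rw [List.flatMap_ite_singleton, filter_range_length_of_pairwise j hsort, conjList_getD hsort,
    List.range'_eq_map_range]
  simp only [Nat.add_comm 1]

lemma seqSgn_ne_zero_iff (l : List ℕ) :
    seqSgn l ≠ 0 ↔ (l : Multiset ℕ) = ((List.range' 1 l.length : List ℕ) : Multiset ℕ) := by
  unfold seqSgn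
  split_ifs with h <;> simp [h]

lemma sgnWord_ne_zero_iff {m : ℕ} (s σ : Fin m → ℕ) :
    sgnWord s σ ≠ 0 ↔ ∀ i < m, (((blockList s (i + 1)).map σ : List ℕ) : Multiset ℕ) =
      ((List.range' 1 (blockList s (i + 1)).length : List ℕ) : Multiset ℕ) := by
  simp only [sgnWord, prod_ne_zero_iff, mem_range, seqSgn_ne_zero_iff, List.length_map]

lemma length_blockList {m : ℕ} (s : Fin m → ℕ) (i : ℕ) :
    (blockList s i).length = (univ.filter (fun p => s p = i)).card :=
  rfl

lemma map_fst_filter_pairs {m : ℕ} (w t : Fin m → ℕ) (b : ℕ) :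
    (((List.finRange m).map (fun p => (w p, t p))).filter (fun c => c.2 = b)).map Prod.fst
      = (blockList t b).map w := by
  simp [blockList, List.filter_map, Function.comp_def]

lemma ne_zero_of_hasWeight {m n : ℕ} {w : Fin m → ℕ} {K : List ℕ} (hw : hasWeight w K)
    (hsum : ∑ i ∈ range n, K.getD i 0 = m) (p : Fin m) : w p ≠ 0 := by
  have hdisj : ((range n : Finset ℕ) : Set ℕ).PairwiseDisjoint
      (fun i => univ.filter (fun q => w q = i + 1)) := by
    intro i _ j _ hij
    simp only [Function.onFun, disjoint_left, mem_filter, mem_univ, true_and]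
    omega
  have hcover : (range n).biUnion (fun i => univ.filter (fun q => w q = i + 1)) = univ :=
    eq_univ_of_card _ <| by
      rw [card_biUnion hdisj, Fintype.card_fin]
      exact (sum_congr rfl fun i _ => hw i).trans hsum
  obtain ⟨i, -, hi⟩ := mem_biUnion.mp (hcover ▸ mem_univ p)
  simp only [mem_filter, mem_univ, true_and] at hi
  omega

theorem stmt0_general {m : ℕ} (L : List ℕ) (hL : IsPartitionOf m L)
    (w t : Fin m → ℕ) (ht : hasWeight t (conjList L)) :
    sgnWord t w ≠ 0 ↔
      (((List.finRange m).map (fun p => (w p, t p)) : List (ℕ × ℕ)) : Multiset (ℕ × ℕ)) =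
        ((((List.range L.length).flatMap
            (fun i => (List.range (L.getD i 0)).map (fun j => (i + 1, j + 1)))) :
          List (ℕ × ℕ)) : Multiset (ℕ × ℕ)) := by
  obtain ⟨hsort, -, hsum⟩ := hL
  have hhead : L.headD 0 ≤ m := hsum ▸ headD_le_sum L
  have hlen : ∀ j, (blockList t (j + 1)).length = (conjList L).getD j 0 := fun j =>
    (length_blockList t _).trans (ht j)
  have hblock_zero : blockList t 0 = [] := List.filter_eq_nil_iff.mpr fun p _ => by
    simpa using ne_zero_of_hasWeight ht ((sum_range_conjList_getD hsort hhead).trans hsum) p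
  change _ ↔ _ = ((youngCells L : List (ℕ × ℕ)) : Multiset (ℕ × ℕ))
  rw [sgnWord_ne_zero_iff, Multiset.eq_iff_forall_map_fst_filter_snd_eq]
  simp only [Multiset.filter_coe, Multiset.map_coe, map_fst_filter_pairs]
  constructor
  · rintro h (_ | j)
    · rw [hblock_zero, youngCells_filter_snd_eq_zero]
      rfl
    · rw [map_fst_filter_youngCells hsort, ← hlen]
      by_cases hj : j < m
      · exact h j hj
      · have hempty : blockList t (j + 1) = [] := List.length_eq_zero_iff.mp <|
          (hlen j).trans (conjList_getD_of_headD_le L (by omega))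
        rw [hempty]
        rfl
  · intro h j _
    rw [hlen]
    simpa only [map_fst_filter_youngCells hsort] using h (j + 1)

/-- For a word `w` of weight `λ` and a word `t` of weight `λ'`, the blockwise
signature `sgn_t(w)` is nonzero iff the multiset of pairs `{(w_i, t_i)}` equals the set of cells
of the Young diagram of `λ`. -/
theorem stmt0 {m : ℕ} (L : List ℕ) (hL : IsPartitionOf m L)
    (w t : Fin m → ℕ) (hw : hasWeight w L) (ht : hasWeight t (conjList L)) :
    sgnWord t w ≠ 0 ↔
      (((List.finRange m).map (fun p => (w p, t p)) : List (ℕ × ℕ)) : Multiset (ℕ × ℕ)) =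
        ((((List.range L.length).flatMap
            (fun i => (List.range (L.getD i 0)).map (fun j => (i + 1, j + 1)))) :
          List (ℕ × ℕ)) : Multiset (ℕ × ℕ)) :=
  stmt0_general L hL w t ht
end

section
/- Let λ ⊢ m, s a word of weight λ and t a word of weight λ'. The quantity sgn_s(π·t) · sgn(π) · sgn_t(π⁻¹·s) is the same for every π in the double coset G(s,t) = {π : sgn_s(π·t) ≠ 0}; i.e., it is an invariant of the double coset. -/
/-!
Inside a block of `s`, a permutation of the positions permutes the letters read along the
block, so `sgn_s(α·w) = sgn(α) · sgn_s(w)` for every `α` in the Young subgroup `Y_s`; by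
induction on the support it suffices to check this for a transposition inside one block, where
it is the alternating property of the sign of a sequence.

If `π, ρ ∈ G(s,t)`, then along every block of `s` both `π·t` and `ρ·t` read a permutation of
`1, …, k`, so the words `(s, π·t)` and `(s, ρ·t)` of pairs have the same content and differ by
a permutation of positions: `ρ·t = γ·(π·t)` with `γ ∈ Y_s`, i.e. `ρ = γπβ` with `β ∈ Y_t`.
Passing from `π` to `ρ` multiplies the three factors by `sgn γ`, `sgn γ · sgn β` and `sgn β`.
-/

open Finset

/-- The Young subgroup `Y_s`: the stabilizer of the word `s` in `S_m`. -/
def Ysub {m : ℕ} (s : Fin m → ℕ) : Set (Equiv.Perm (Fin m)) := {π | pact π s = s}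

/-- `G(s,t) = {π ∈ S_m : sgn_s(π·t) ≠ 0}`. -/
def Gst {m : ℕ} (s t : Fin m → ℕ) : Set (Equiv.Perm (Fin m)) :=
  {π | sgnWord s (pact π t) ≠ 0}

open Equiv

theorem exists_perm_comp_eq_of_card_fiber {α β : Type*} [Fintype α] [DecidableEq β]
    {f g : α → β} (h : ∀ c, #{a | f a = c} = #{a | g a = c}) :
    ∃ σ : Perm α, g ∘ σ = f :=
  ⟨ofFiberEquiv fun c => Fintype.equivOfCardEq (by simpa only [Fintype.card_subtype] using h c),
    funext (ofFiberEquiv_map _)⟩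

theorem List.sum_range_getD {M : Type*} [AddCommMonoid M] (L : List M) :
    ∑ i ∈ Finset.range L.length, L.getD i 0 = L.sum := by
  rw [Finset.sum_range, ← sum_ofFn]
  simp

theorem Fin.Iio_succ_eq_cons {k : ℕ} (j : Fin k) :
    Iio j.succ = Finset.cons (0 : Fin (k + 1)) ((Iio j).map (Fin.succEmb k))
      (by simpa only [mem_map, coe_succEmb] using fun ⟨_, _, h⟩ => succ_ne_zero _ h) := by
  ext i
  cases i using Fin.cases
  · simp [Fin.succ_pos]
  · simp

/-- Unlike `(-1) ^ invCount`, this Vandermonde-type product is visibly multiplied by `sign σ`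
when the sequence is reindexed by `σ`. -/
def signProd {k : ℕ} (g : Fin k → ℕ) : ℤ :=
  ∏ j, ∏ i ∈ Iio j, Int.sign ((g j : ℤ) - g i)

theorem signProd_comp_perm {k : ℕ} (g : Fin k → ℕ) (σ : Perm (Fin k)) :
    signProd (g ∘ σ) = Perm.sign σ * signProd g := by
  unfold signProd
  exact σ.prod_Iio_comp_eq_sign_mul_prod (f := fun i j => Int.sign ((g j : ℤ) - g i))
    fun i j => by rw [← Int.sign_neg, neg_sub]

theorem signProd_succ {k : ℕ} (g : Fin (k + 1) → ℕ) :
    signProd g = (∏ j : Fin k, Int.sign ((g j.succ : ℤ) - g 0)) * signProd (g ∘ Fin.succ) := by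
  simp only [signProd, Fin.prod_univ_succ, Fin.Iio_succ_eq_cons, prod_cons, prod_map,
    Fin.coe_succEmb, prod_mul_distrib, Function.comp_apply]
  rw [prod_eq_one fun i hi => absurd (mem_Iio.1 hi) (Fin.not_lt_zero i), one_mul]

theorem neg_one_pow_countP_lt {a : ℕ} {l : List ℕ} (ha : a ∉ l) :
    (-1) ^ l.countP (· < a) = (l.map fun b : ℕ => Int.sign ((b : ℤ) - a)).prod := by
  induction l with
  | nil => rfl
  | cons b l ih =>
    simp only [List.mem_cons, not_or] at ha
    rw [List.countP_cons, List.map_cons, List.prod_cons, pow_add, ih ha.2, mul_comm]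
    rcases lt_or_gt_of_ne (Ne.symm ha.1) with h | h <;>
      simp [h, Int.sign_eq_neg_one_of_neg, Int.sign_eq_one_of_pos, h.not_gt]

theorem neg_one_pow_invCount_ofFn {k : ℕ} (g : Fin k → ℕ) (hg : Function.Injective g) :
    (-1) ^ invCount (List.ofFn g) = signProd g := by
  induction k with
  | zero => rfl
  | succ k ih =>
    have h0 : g 0 ∉ List.ofFn (g ∘ Fin.succ) := by
      simp [hg.eq_iff]
    rw [List.ofFn_succ, invCount, pow_add, ← Function.comp_def,
      ih _ (hg.comp (Fin.succ_injective _)), neg_one_pow_countP_lt h0, signProd_succ,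
      List.map_ofFn, List.prod_ofFn]
    rfl

theorem seqSgn_ofFn_comp_perm {k : ℕ} (g : Fin k → ℕ) (σ : Perm (Fin k)) :
    seqSgn (List.ofFn (g ∘ σ)) = Perm.sign σ * seqSgn (List.ofFn g) := by
  have hperm := σ.ofFn_comp_perm g
  unfold seqSgn
  rw [Multiset.coe_eq_coe.2 hperm, hperm.length_eq]
  split_ifs with h
  · have hg : Function.Injective g := by
      rw [← List.nodup_ofFn, ← Multiset.coe_nodup, h]
      exact List.nodup_range'
    rw [neg_one_pow_invCount_ofFn _ (hg.comp σ.injective), neg_one_pow_invCount_ofFn _ hg,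
      signProd_comp_perm]
  · simp

theorem seqSgn_map_comp_swap {α : Type*} [DecidableEq α] {B : List α} (hB : B.Nodup)
    (u : α → ℕ) {p q : α} (hp : p ∈ B) (hq : q ∈ B) (hpq : p ≠ q) :
    seqSgn (B.map (u ∘ swap p q)) = -seqSgn (B.map u) := by
  obtain ⟨i, rfl⟩ := List.get_of_mem hp
  obtain ⟨j, rfl⟩ := List.get_of_mem hq
  have hinj : Function.Injective B.get := List.nodup_iff_injective_get.1 hB
  have hmap (f : α → ℕ) : B.map f = List.ofFn (f ∘ B.get) := by
    rw [← List.map_ofFn, List.ofFn_get]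
  rw [hmap, hmap, Function.comp_assoc, hinj.swap_comp, ← Function.comp_assoc,
    seqSgn_ofFn_comp_perm, Perm.sign_swap (hinj.ne_iff.1 hpq)]
  simp

section Words

variable {m : ℕ}

theorem pact_one (w : Fin m → ℕ) : pact 1 w = w := rfl

theorem pact_mul (α β : Perm (Fin m)) (w : Fin m → ℕ) :
    pact (α * β) w = pact α (pact β w) := by
  ext p
  simp [pact]

theorem pact_inv (α : Perm (Fin m)) (w : Fin m → ℕ) : pact α⁻¹ w = w ∘ α := by
  ext p
  simp [pact]

theorem mem_Ysub_iff {w : Fin m → ℕ} {α : Perm (Fin m)} : α ∈ Ysub w ↔ w ∘ α = w := by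
  show w ∘ α.symm = w ↔ _
  rw [comp_symm_eq, eq_comm]

theorem inv_mem_Ysub {w : Fin m → ℕ} {α : Perm (Fin m)} (hα : α ∈ Ysub w) : α⁻¹ ∈ Ysub w :=
  mem_Ysub_iff.2 hα

variable {s t : Fin m → ℕ}

theorem mem_blockList {c : ℕ} {p : Fin m} : p ∈ blockList s c ↔ s p = c := by
  simp [blockList]

theorem nodup_blockList {c : ℕ} : (blockList s c).Nodup :=
  (List.nodup_finRange m).filter _

theorem sgnWord_comp_swap (hs : ∀ p, s p ∈ Icc 1 m) (u : Fin m → ℕ) {p q : Fin m}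
    (hpq : p ≠ q) (hspq : s p = s q) :
    sgnWord s (u ∘ swap p q) = -sgnWord s u := by
  have hp := mem_Icc.1 (hs p)
  have hmem : s p - 1 ∈ range m := mem_range.2 (by omega)
  unfold sgnWord
  rw [← mul_prod_erase _ _ hmem, ← mul_prod_erase _ _ hmem, Nat.sub_add_cancel hp.1,
    seqSgn_map_comp_swap nodup_blockList u (mem_blockList.2 rfl)
      (mem_blockList.2 hspq.symm) hpq, neg_mul]
  congr 2
  refine prod_congr rfl fun i hi => congrArg seqSgn (List.map_congr_left fun r hr => ?_)
  have hi : i ≠ s p - 1 := (mem_erase.1 hi).1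
  have hr : s r = i + 1 := mem_blockList.1 hr
  rw [Function.comp_apply, swap_apply_of_ne_of_ne] <;> rintro rfl <;> omega

theorem sgnWord_comp_perm (hs : ∀ p, s p ∈ Icc 1 m) (u : Fin m → ℕ) {α : Perm (Fin m)}
    (hα : s ∘ α = s) : sgnWord s (u ∘ α) = Perm.sign α * sgnWord s u := by
  induction h : α.support.card using Nat.strong_induction_on generalizing α u with
  | _ n ih =>
  rcases eq_or_ne α 1 with rfl | hα1
  · simp
  obtain ⟨p, hp⟩ : ∃ p, α p ≠ p := not_forall.1 fun h => hα1 (Equiv.ext h)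
  have hsα (q : Fin m) : s (α q) = s q := congrFun hα q
  have hτα : s ∘ (swap p (α p) * α) = s := by
    ext q
    rw [Function.comp_apply, Perm.mul_apply, swap_apply_def]
    split_ifs with h₁ h₂
    · rw [hsα, ← h₁, hsα]
    · rw [α.injective h₂]
    · exact hsα q
  have hcomp : u ∘ α = (u ∘ swap p (α p)) ∘ (swap p (α p) * α) := by
    ext q; simp
  rw [hcomp, ih _ (h ▸ Perm.card_support_swap_mul hp) _ hτα rfl,
    sgnWord_comp_swap hs u hp.symm (hsα p).symm, Perm.sign_mul, Perm.sign_swap hp.symm]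
  push_cast
  ring

theorem sgnWord_pact_of_mem_Ysub (hs : ∀ p, s p ∈ Icc 1 m) (u : Fin m → ℕ)
    {α : Perm (Fin m)} (hα : α ∈ Ysub s) :
    sgnWord s (pact α u) = Perm.sign α * sgnWord s u := by
  rw [← Perm.sign_inv]
  exact sgnWord_comp_perm hs u (mem_Ysub_iff.1 (inv_mem_Ysub hα))

theorem card_filter_eq_count_map_blockList (u : Fin m → ℕ) (c x : ℕ) :
    #{p | s p = c ∧ u p = x} = ((blockList s c).map u : Multiset ℕ).count x := by
  rw [← Multiset.map_coe, Multiset.count_map, blockList, ← Multiset.filter_coe,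
    Multiset.filter_filter, Fin.univ_def, card_def, filter_val]
  refine congrArg Multiset.card (Multiset.filter_congr fun p _ => ?_)
  rw [@eq_comm _ x, and_comm]

theorem coe_map_blockList_of_mem_Gst (hs : ∀ p, s p ∈ Icc 1 m) {π : Perm (Fin m)}
    (hπ : π ∈ Gst s t) (c : ℕ) :
    ((blockList s c).map (pact π t) : Multiset ℕ) = List.range' 1 (blockList s c).length := by
  by_cases hc : 1 ≤ c ∧ c ≤ m
  · have hne := prod_ne_zero_iff.1 hπ (c - 1) (mem_range.2 (by omega))
    rw [Nat.sub_add_cancel hc.1] at hne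
    by_contra h
    exact hne (by rw [seqSgn, List.length_map, if_neg h])
  · have hnil : blockList s c = [] := List.filter_eq_nil_iff.2 fun p _ => by
      have := mem_Icc.1 (hs p)
      simp only [decide_eq_true_eq]
      omega
    simp [hnil]

theorem mem_Icc_of_mem_Gst (hs : ∀ p, s p ∈ Icc 1 m) {π : Perm (Fin m)} (hπ : π ∈ Gst s t)
    (p : Fin m) : t p ∈ Icc 1 m := by
  have hmem : pact π t (π p) ∈ ((blockList s (s (π p))).map (pact π t) : Multiset ℕ) :=
    Multiset.mem_coe.2 (List.mem_map_of_mem (mem_blockList.2 rfl))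
  have hlen : (blockList s (s (π p))).length ≤ m :=
    (List.length_filter_le _ _).trans (List.length_finRange).le
  rw [coe_map_blockList_of_mem_Gst hs hπ, Multiset.mem_coe, List.mem_range'_1,
    show pact π t (π p) = t p by simp [pact]] at hmem
  exact mem_Icc.2 ⟨hmem.1, by omega⟩

theorem exists_eq_mul_mul_of_mem_Gst (hs : ∀ p, s p ∈ Icc 1 m) {π ρ : Perm (Fin m)}
    (hπ : π ∈ Gst s t) (hρ : ρ ∈ Gst s t) : ∃ γ ∈ Ysub s, ∃ β ∈ Ysub t, ρ = γ * π * β := by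
  obtain ⟨σ, hσ⟩ := exists_perm_comp_eq_of_card_fiber
    (f := fun p => (s p, pact π t p)) (g := fun p => (s p, pact ρ t p)) fun ⟨c, x⟩ => by
      simp only [Prod.mk.injEq, card_filter_eq_count_map_blockList,
        coe_map_blockList_of_mem_Gst hs hπ, coe_map_blockList_of_mem_Gst hs hρ]
  have hsσ : s ∘ σ = s := congrArg (Prod.fst ∘ ·) hσ
  have htσ : pact ρ t ∘ σ = pact π t := congrArg (Prod.snd ∘ ·) hσ
  refine ⟨σ, mem_Ysub_iff.2 hsσ, π⁻¹ * σ⁻¹ * ρ, ?_, by group⟩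
  show pact _ t = t
  rw [pact_mul, pact_mul, pact_inv σ, htσ, ← pact_mul, inv_mul_cancel, pact_one]

theorem mem_Icc_of_hasWeight {L : List ℕ} (hL : IsPartitionOf m L) (hs : hasWeight s L)
    (p : Fin m) : s p ∈ Icc 1 m := by
  obtain ⟨-, hpos, hsum⟩ := hL
  have hlen : L.length ≤ m := hsum ▸ L.length_le_sum_of_one_le hpos
  have hcard : #{q | s q ∈ (range L.length).image (· + 1)} = #(univ : Finset (Fin m)) := by
    rw [← sum_card_fiberwise_eq_card_filter, sum_image (add_left_injective 1).injOn,
      sum_congr rfl fun i _ => hs i, List.sum_range_getD, hsum, card_univ, Fintype.card_fin]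
  obtain ⟨i, hi, hip⟩ := mem_image.1 (card_filter_eq_iff.1 hcard p (mem_univ p))
  rw [mem_range] at hi
  exact mem_Icc.2 ⟨by omega, by omega⟩

def doubleCosetSign (s t : Fin m → ℕ) (π : Perm (Fin m)) : ℤ :=
  sgnWord s (pact π t) * Perm.sign π * sgnWord t (pact π⁻¹ s)

theorem doubleCosetSign_mul_mul (hs : ∀ p, s p ∈ Icc 1 m) (ht : ∀ p, t p ∈ Icc 1 m)
    (π : Perm (Fin m)) {γ β : Perm (Fin m)} (hγ : γ ∈ Ysub s) (hβ : β ∈ Ysub t) :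
    doubleCosetSign s t (γ * π * β) = doubleCosetSign s t π := by
  have hγπβ : pact (γ * π * β) t = pact γ (pact π t) := by
    rw [pact_mul, pact_mul, hβ]
  have hγπβ_inv : pact (γ * π * β)⁻¹ s = pact β⁻¹ (pact π⁻¹ s) := by
    rw [mul_inv_rev, mul_inv_rev, pact_mul, pact_mul, inv_mem_Ysub hγ]
  have hsq (σ : Perm (Fin m)) : (Perm.sign σ : ℤ) * Perm.sign σ = 1 := by
    rw [← Units.val_mul, Int.units_mul_self, Units.val_one]
  unfold doubleCosetSign
  rw [hγπβ, hγπβ_inv, sgnWord_pact_of_mem_Ysub hs _ hγ,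
    sgnWord_pact_of_mem_Ysub ht _ (inv_mem_Ysub hβ), Perm.sign_mul, Perm.sign_mul, Perm.sign_inv]
  push_cast
  linear_combination
    (sgnWord s (pact π t) * Perm.sign π * sgnWord t (pact π⁻¹ s)) *
      ((Perm.sign β : ℤ) * Perm.sign β * hsq γ + hsq β)

end Words

theorem stmt3_general {m : ℕ} (L : List ℕ) (hL : IsPartitionOf m L)
    (s t : Fin m → ℕ) (hs : hasWeight s L) :
    ∀ π ∈ Gst s t, ∀ ρ ∈ Gst s t,
      sgnWord s (pact π t) * ((Equiv.Perm.sign π : ℤ)) * sgnWord t (pact π⁻¹ s) =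
        sgnWord s (pact ρ t) * ((Equiv.Perm.sign ρ : ℤ)) * sgnWord t (pact ρ⁻¹ s) := by
  intro π hπ ρ hρ
  have hs_mem := mem_Icc_of_hasWeight hL hs
  obtain ⟨γ, hγ, β, hβ, rfl⟩ := exists_eq_mul_mul_of_mem_Gst hs_mem hπ hρ
  exact (doubleCosetSign_mul_mul hs_mem (mem_Icc_of_mem_Gst hs_mem hπ) π hγ hβ).symm

/-- The quantity `sgn_s(π·t)·sgn(π)·sgn_t(π⁻¹·s)` is the same for every
`π` in the double coset `G(s,t)`. -/
theorem stmt3 {m : ℕ} (L : List ℕ) (hL : IsPartitionOf m L)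
    (s t : Fin m → ℕ) (hs : hasWeight s L) (ht : hasWeight t (conjList L)) :
    ∀ π ∈ Gst s t, ∀ ρ ∈ Gst s t,
      sgnWord s (pact π t) * ((Equiv.Perm.sign π : ℤ)) * sgnWord t (pact π⁻¹ s) =
        sgnWord s (pact ρ t) * ((Equiv.Perm.sign ρ : ℤ)) * sgnWord t (pact ρ⁻¹ s) :=
  stmt3_general L hL s t hs
end

section
/- For any partition λ of m, the inversion sign of λ equals the inversion sign of its conjugate: (−1)^λ = (−1)^{λ'}, where (−1)^λ is defined as (−1)^{inv(w)} for the word w = 12…λ_1 12…λ_2 ⋯ 12…λ_ℓ. -/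
open Finset

/-!
Index the cells of a diagram by (row, column), both counted from `0`. The row word lists the
cells row by row, the cell `(i, x)` carrying the letter `x + 1`, so its inversions are the pairs
of cells `(i, x)`, `(j, y)` with `i < j` and `y < x`. Transposition sends such a pair to the pair
`(y, j)`, `(x, i)` of cells of the conjugate diagram, which is again of this kind. Hence the two
row words have the same number of inversions, not merely the same sign.
-/

theorem List.sum_map_eq_sum_range_getD {α : Type*} (f : α → ℕ) (l : List α) (d : α) :
    (l.map f).sum = ∑ i ∈ Finset.range l.length, f (l.getD i d) := by
  induction l with
  | nil => simp
  | cons a l ih => simp [ih, Finset.sum_range_succ', add_comm]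

theorem List.sum_map_range (f : ℕ → ℕ) (n : ℕ) :
    ((List.range n).map f).sum = ∑ i ∈ Finset.range n, f i := by
  rw [← List.toFinset_range, List.sum_toFinset _ List.nodup_range]

theorem List.countP_range (p : ℕ → Prop) [DecidablePred p] (n : ℕ) :
    (List.range n).countP (fun i => decide (p i)) = #((Finset.range n).filter p) := by
  rw [Finset.card_def, Finset.filter_val, ← Multiset.countP_eq_card_filter]
  exact (Multiset.coe_countP _ _).symm

theorem Finset.range_eq_filter_lt {a c : ℕ} (h : a ≤ c) :
    range a = (range c).filter (· < a) := by
  ext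
  simp only [mem_range, mem_filter]
  omega

theorem List.getD_le_of_forall_le {L : List ℕ} {c : ℕ} (hc : ∀ p ∈ L, p ≤ c) (i : ℕ) :
    L.getD i 0 ≤ c := by
  rcases lt_or_ge i L.length with h | h
  · rw [List.getD_eq_getElem _ _ h]
    exact hc _ (List.getElem_mem h)
  · rw [List.getD_eq_default _ _ h]
    exact Nat.zero_le c

theorem invCount_map_of_strictMono {f : ℕ → ℕ} (hf : StrictMono f) (l : List ℕ) :
    invCount (l.map f) = invCount l := by
  induction l with
  | nil => rfl
  | cons a l ih => simp [invCount, ih, List.countP_map, Function.comp_def, hf.lt_iff_lt]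

theorem invCount_eq_zero_of_pairwise_le {l : List ℕ} (hl : l.Pairwise (· ≤ ·)) :
    invCount l = 0 := by
  induction l with
  | nil => rfl
  | cons a l ih =>
    rw [List.pairwise_cons] at hl
    simp only [invCount, ih hl.2, add_zero, List.countP_eq_zero, decide_eq_true_eq, not_lt]
    exact hl.1

def crossInvCount (l l' : List ℕ) : ℕ :=
  (l.map fun a => l'.countP (· < a)).sum

theorem invCount_append (l l' : List ℕ) :
    invCount (l ++ l') = invCount l + invCount l' + crossInvCount l l' := by
  induction l with
  | nil => simp [invCount, crossInvCount]
  | cons a l ih =>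
    simp only [List.cons_append, invCount, List.countP_append, ih, crossInvCount, List.map_cons,
      List.sum_cons]
    omega

theorem crossInvCount_append_right (l l₁ l₂ : List ℕ) :
    crossInvCount l (l₁ ++ l₂) = crossInvCount l l₁ + crossInvCount l l₂ := by
  simp only [crossInvCount, List.countP_append, List.sum_map_add]

theorem crossInvCount_flatten_right (l : List ℕ) (ls : List (List ℕ)) :
    crossInvCount l ls.flatten = (ls.map (crossInvCount l)).sum := by
  induction ls with
  | nil => simp [crossInvCount]
  | cons l' ls ih =>
    rw [List.flatten_cons, crossInvCount_append_right, ih, List.map_cons, List.sum_cons]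

theorem invCount_flatten (ls : List (List ℕ)) :
    invCount ls.flatten = (ls.map invCount).sum +
      ∑ i ∈ range ls.length, ∑ j ∈ range ls.length,
        if i < j then crossInvCount (ls.getD i []) (ls.getD j []) else 0 := by
  induction ls with
  | nil => simp [invCount]
  | cons l ls ih =>
    rw [List.flatten_cons, invCount_append, ih, crossInvCount_flatten_right,
      List.sum_map_eq_sum_range_getD (crossInvCount l) _ [], List.length_cons,
      Finset.sum_range_succ']
    simp [Finset.sum_range_succ', add_comm, add_left_comm, add_assoc]

theorem crossInvCount_range {a b c : ℕ} (ha : a ≤ c) (hb : b ≤ c) :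
    crossInvCount (List.range a) (List.range b) =
      ∑ x ∈ range c, ∑ y ∈ range c, if y < x ∧ x < a ∧ y < b then 1 else 0 := by
  simp only [crossInvCount, List.sum_map_range, List.countP_range, card_filter,
    range_eq_filter_lt ha, range_eq_filter_lt hb, sum_filter]
  refine sum_congr rfl fun x _ => ?_
  split_ifs with hx <;> simp [hx, and_comm, ite_and]

def cellInvPairs (L : List ℕ) (n c : ℕ) : Finset ((ℕ × ℕ) × (ℕ × ℕ)) :=
  ((range n ×ˢ range c) ×ˢ (range n ×ˢ range c)).filter fun q =>
    q.1.1 < q.2.1 ∧ q.2.2 < q.1.2 ∧ q.1.2 < L.getD q.1.1 0 ∧ q.2.2 < L.getD q.2.1 0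

theorem invCount_rowWord {L : List ℕ} {c : ℕ} (hc : ∀ p ∈ L, p ≤ c) :
    invCount ((L.map fun p => List.range' 1 p).flatten) = #(cellInvPairs L L.length c) := by
  have hword : (L.map fun p => List.range' 1 p).flatten =
      ((L.map List.range).flatten).map (1 + ·) := by
    simp [List.map_flatten, List.range'_eq_map_range, Function.comp_def]
  have hrow (i : ℕ) : (L.map List.range).getD i [] = List.range (L.getD i 0) := by
    rw [← List.range_zero, List.getD_map]
  have hrange (k : ℕ) : invCount (List.range k) = 0 :=
    invCount_eq_zero_of_pairwise_le (List.pairwise_lt_range.imp le_of_lt)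
  rw [hword, invCount_map_of_strictMono add_right_strictMono, invCount_flatten]
  simp only [List.map_map, Function.comp_def, hrange, List.map_const', List.sum_replicate,
    smul_zero, zero_add, List.length_map, hrow,
    crossInvCount_range (L.getD_le_of_forall_le hc _) (L.getD_le_of_forall_le hc _),
    cellInvPairs, card_filter, sum_product]
  refine sum_congr rfl fun i _ => ?_
  rw [sum_comm]
  refine sum_congr rfl fun j _ => ?_
  split_ifs with hij <;> simp [hij]

theorem le_headD_of_mem {L : List ℕ} (hL : L.Pairwise (· ≥ ·)) {p : ℕ} (hp : p ∈ L) :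
    p ≤ L.headD 0 := by
  cases L with
  | nil => simp at hp
  | cons a L =>
    rcases List.mem_cons.mp hp with rfl | hp
    · exact le_rfl
    · exact List.rel_of_pairwise_cons hL hp

theorem length_conjList (L : List ℕ) : (conjList L).length = L.headD 0 := by
  simp [conjList]

theorem conjList_le_length {L : List ℕ} {q : ℕ} (hq : q ∈ conjList L) : q ≤ L.length := by
  obtain ⟨j, -, rfl⟩ := List.mem_map.mp hq
  exact List.countP_le_length

theorem getD_conjList {L : List ℕ} (hL : L.Pairwise (· ≥ ·)) (x : ℕ) :
    (conjList L).getD x 0 = L.countP (fun p => x + 1 ≤ p) := by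
  by_cases hx : x < L.headD 0
  · unfold conjList
    rw [List.getD_eq_getElem _ 0 (by simpa using hx), List.getElem_map, List.getElem_range]
  · rw [List.getD_eq_default _ _ (by rw [length_conjList]; omega), eq_comm, List.countP_eq_zero]
    intro p hp
    have := le_headD_of_mem hL hp
    simp only [decide_eq_true_eq]
    omega

theorem lt_countP_iff_lt_getD {L : List ℕ} (hL : L.Pairwise (· ≥ ·)) (i x : ℕ) :
    i < L.countP (fun p => x + 1 ≤ p) ↔ x < L.getD i 0 := by
  induction L generalizing i with
  | nil => simp
  | cons a L ih =>
    by_cases hxa : x < a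
    · have hcons : (a :: L).countP (fun p => x + 1 ≤ p) = L.countP (fun p => x + 1 ≤ p) + 1 :=
        List.countP_cons_of_pos (by simpa using hxa)
      cases i with
      | zero => simp only [hcons, List.getD_cons_zero, Nat.zero_lt_succ, hxa]
      | succ i => rw [hcons, List.getD_cons_succ, ← ih hL.of_cons i]; omega
    · have hle_a : ∀ p ∈ a :: L, p ≤ a := fun p hp => le_headD_of_mem hL hp
      have hzero : (a :: L).countP (fun p => x + 1 ≤ p) = 0 := by
        rw [List.countP_eq_zero]
        intro p hp
        have := hle_a p hp
        simp only [decide_eq_true_eq]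
        omega
      have := (a :: L).getD_le_of_forall_le hle_a i
      rw [hzero]
      omega

theorem lt_getD_conjList_iff {L : List ℕ} (hL : L.Pairwise (· ≥ ·)) (i x : ℕ) :
    i < (conjList L).getD x 0 ↔ x < L.getD i 0 := by
  rw [getD_conjList hL, lt_countP_iff_lt_getD hL]

theorem card_cellInvPairs_conjList {L : List ℕ} (hL : L.Pairwise (· ≥ ·)) (n c : ℕ) :
    #(cellInvPairs L n c) = #(cellInvPairs (conjList L) c n) := by
  refine card_nbij' (fun q => ((q.2.2, q.2.1), (q.1.2, q.1.1)))
    (fun q => ((q.2.2, q.2.1), (q.1.2, q.1.1))) ?_ ?_ (fun _ _ => rfl) (fun _ _ => rfl)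
  all_goals
    rintro ⟨⟨i, x⟩, ⟨j, y⟩⟩
    simp only [cellInvPairs, coe_filter, mem_product, mem_range, Set.mem_ofPred_eq,
      lt_getD_conjList_iff hL]
    omega

theorem invCount_rowWord_conjList {L : List ℕ} (hL : L.Pairwise (· ≥ ·)) :
    invCount ((L.map fun p => List.range' 1 p).flatten) =
      invCount (((conjList L).map fun p => List.range' 1 p).flatten) := by
  rw [invCount_rowWord (fun _ => le_headD_of_mem hL),
    invCount_rowWord (fun _ => conjList_le_length), card_cellInvPairs_conjList hL, length_conjList]

/-- `(−1)^λ = (−1)^{λ'}` for any partition `λ` of `m`. -/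
theorem stmt5 {m : ℕ} (L : List ℕ) (hL : IsPartitionOf m L) :
    partSign L = partSign (conjList L) := by
  rw [partSign, partSign, invCount_rowWord_conjList hL.1]
end
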